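/- Let N be a binary normal network on X, and let {a,b} be a reticulated cherry of N with reticulation leaf b. Then for all x in X - {a,b}, the rooted triple ab|x is displayed by N. -/

import Mathlib

/-- A (candidate) rooted phylogenetic network structure: a directed graph on a
vertex type `V` with a distinguished root and a labelling of (intended) leaves
by elements of `X`.  The combinatorial axioms are imposed by predicates below. -/
structure Network (X : Type) where
  V : Type
  arc : V → V → Prop
  root : V
  leaf : X → V

namespace Network

variable {X : Type} (N : Network X)

def parents (v : N.V) : Set N.V := {u | N.arc u v}

def children (u : N.V) : Set N.V := {v | N.arc u v}

/-- in-degree 1, out-degree 2 -/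
def IsTreeVertex (v : N.V) : Prop := (N.parents v).ncard = 1 ∧ (N.children v).ncard = 2

/-- in-degree 2, out-degree 1 -/
def IsRetic (v : N.V) : Prop := (N.parents v).ncard = 2 ∧ (N.children v).ncard = 1

/-- in-degree 1, out-degree 0 -/
def IsLeafVertex (v : N.V) : Prop := (N.parents v).ncard = 1 ∧ (N.children v).ncard = 0

def Acyclic : Prop := ∀ v : N.V, ¬ Relation.TransGen N.arc v v

/-- A well-formed binary phylogenetic network (non-degenerate case): a finite
acyclic digraph with a root of in-degree 0 and out-degree 2, leaves of
in-degree 1 and out-degree 0 bijectively labelled by `X`, and all remaining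
vertices tree vertices or reticulations. -/
def Wf : Prop :=
  Finite N.V ∧ N.Acyclic ∧
  (N.parents N.root).ncard = 0 ∧ (N.children N.root).ncard = 2 ∧
  Function.Injective N.leaf ∧
  (∀ x : X, N.IsLeafVertex (N.leaf x)) ∧
  (∀ v : N.V, v = N.root ∨ (∃ x, N.leaf x = v) ∨ N.IsTreeVertex v ∨ N.IsRetic v)

/-- The degenerate network on a single leaf: one vertex, no arcs. -/
def Degenerate : Prop :=
  (∀ v : N.V, v = N.root) ∧ (∀ u v : N.V, ¬ N.arc u v) ∧
  (∃! _x : X, True) ∧ (∀ x : X, N.leaf x = N.root)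

def IsBinaryPhylo : Prop := N.Wf ∨ N.Degenerate

/-- `l` is a directed path (a list of successively adjacent vertices) from `u` to `v`. -/
def IsPathFromTo (l : List N.V) (u v : N.V) : Prop :=
  l.Chain' N.arc ∧ l.head? = some u ∧ l.getLast? = some v

/-- `v` is a descendant of `u` (equivalently, `u` is an ancestor of `v`). -/
def Desc (u v : N.V) : Prop := Relation.ReflTransGen N.arc u v

/-- The visibility set of `u`: those leaf labels `x` such that every directed
path from the root to the leaf labelled `x` traverses `u`. -/
def visSet (u : N.V) : Set X :=
  {x | ∀ l : List N.V, N.IsPathFromTo l N.root (N.leaf x) → u ∈ l}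

/-- The cluster set of `u`: leaf labels of leaves that are descendants of `u`. -/
def cluster (u : N.V) : Set X := {x | N.Desc u (N.leaf x)}

/-- A tree path from `u` to `t`: a directed path whose vertices other than the
endpoints are tree vertices. -/
def IsTreePath (l : List N.V) (u t : N.V) : Prop :=
  N.IsPathFromTo l u t ∧ ∀ v ∈ l, v ≠ u → v ≠ t → N.IsTreeVertex v

/-- Tree-child: every vertex with a child has a child that is a tree vertex or a leaf. -/
def TreeChild : Prop :=
  ∀ v : N.V, (∃ c, N.arc v c) → ∃ c, N.arc v c ∧ (N.IsTreeVertex c ∨ N.IsLeafVertex c)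

/-- Some reticulation arc `(u,v)` is a shortcut: there is a directed path from
`u` to `v` avoiding the arc `(u,v)`. -/
def HasShortcut : Prop :=
  ∃ u v, N.arc u v ∧ N.IsRetic v ∧ ∃ w, N.arc u w ∧ w ≠ v ∧ N.Desc w v

/-- Normal: tree-child with no shortcuts. -/
def IsNormal : Prop := N.TreeChild ∧ ¬ N.HasShortcut

def SiblingRetics (u v : N.V) : Prop :=
  u ≠ v ∧ N.IsRetic u ∧ N.IsRetic v ∧ ∃ p, N.arc p u ∧ N.arc p v

def StackRetics (u v : N.V) : Prop :=
  N.IsRetic u ∧ N.IsRetic v ∧ N.arc u v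

/-- `u` and `v` are near-sibling reticulations: some tree vertex `t` has as its
two children `v` and a tree vertex `s` that is a parent of `u`. -/
def NearSiblingRetics (u v : N.V) : Prop :=
  u ≠ v ∧ N.IsRetic u ∧ N.IsRetic v ∧
  ∃ t s, N.IsTreeVertex t ∧ N.IsTreeVertex s ∧ N.arc t s ∧ N.arc t v ∧ N.arc s u

/-- `u` and `v` are near-stack reticulations: the child of `u` is a tree vertex
that is a parent of `v`. -/
def NearStackRetics (u v : N.V) : Prop :=
  N.IsRetic u ∧ N.IsRetic v ∧ ∃ s, N.arc u s ∧ N.IsTreeVertex s ∧ N.arc s v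

def NoNearRetics : Prop :=
  (∀ u v, ¬ N.NearSiblingRetics u v) ∧ (∀ u v, ¬ N.NearStackRetics u v)

/-- `{a,b}` is a cherry: the leaves labelled `a` and `b` share a parent. -/
def Cherry (a b : X) : Prop :=
  a ≠ b ∧ ∃ p, N.arc p (N.leaf a) ∧ N.arc p (N.leaf b)

/-- `{a,b}` is a reticulated cherry with reticulation leaf `b`. -/
def ReticCherry (a b : X) : Prop :=
  a ≠ b ∧ ∃ pa pb, N.arc pa (N.leaf a) ∧ N.arc pb (N.leaf b) ∧
    N.IsRetic pb ∧ N.arc pa pb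

/-- `N` displays the rooted triple `xy|z`: there is a subdigraph of `N` that
is a subdivision of the rooted triple tree with `z` adjacent to the root,
i.e. vertices `p` (the root image) and `q` (the image of the parent of `x,y`)
together with internally disjoint directed paths as below. -/
def Displays (x y z : X) : Prop :=
  x ≠ y ∧ x ≠ z ∧ y ≠ z ∧
  ∃ (p q : N.V) (l0 lx ly lz : List N.V),
    p ≠ q ∧
    N.IsPathFromTo l0 p q ∧
    N.IsPathFromTo lx q (N.leaf x) ∧
    N.IsPathFromTo ly q (N.leaf y) ∧
    N.IsPathFromTo lz p (N.leaf z) ∧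
    (∀ v ∈ lx, v ∈ ly → v = q) ∧
    (∀ v ∈ l0, v ∈ lx ∨ v ∈ ly → v = q) ∧
    (∀ v ∈ lz, v ∈ l0 ∨ v ∈ lx ∨ v ∈ ly → v = p)

/-- `R(N)`: the set of rooted triples displayed by `N`, encoded as ordered
triples `(x, y, z)` standing for `xy|z`. -/
def RDisp : Set (X × X × X) := {t | N.Displays t.1 t.2.1 t.2.2}

/-- Isomorphism of networks on the same leaf set: a digraph isomorphism fixing
each leaf label. -/
def Isomorphic (N1 N2 : Network X) : Prop :=
  ∃ φ : N1.V ≃ N2.V,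
    (∀ u v, N1.arc u v ↔ N2.arc (φ u) (φ v)) ∧ (∀ x, φ (N1.leaf x) = N2.leaf x)

/-- A candidate set for `b` (relative to `a`): a non-empty subset
`W ⊆ X - {a,b}` satisfying conditions (W1)–(W5). -/
def CandidateSet (a b : X) (W : Set X) : Prop :=
  W.Nonempty ∧ a ∉ W ∧ b ∉ W ∧
  -- (W1)
  (∀ c ∈ W, ∀ x : X, x ∉ W → x ≠ b →
    N.Displays b c x ∧ ¬ N.Displays a c b) ∧
  -- (W2)
  (∀ c ∈ W, ∀ c' ∈ W, c ≠ c' → ¬ N.Displays b c c') ∧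
  -- (W3)
  (∀ c ∈ W, ∀ x : X, x ∉ W → x ≠ a → x ≠ b →
    (N.Displays c x a ↔ N.Displays b x a)) ∧
  -- (W4)
  (∀ x y : X, x ∉ W → x ≠ a → x ≠ b → y ∉ W → y ≠ a → y ≠ b →
    N.Displays b x y → ¬ N.Displays a x y → ∀ c ∈ W, N.Displays c x y) ∧
  -- (W5)
  (∀ c ∈ W, (∀ x : X, x ∉ W → x ≠ a → x ≠ b → N.Displays a c x) →
    ∀ x : X, x ∉ W → x ≠ a → x ≠ b → ¬ N.Displays a x c ∧ ¬ N.Displays a x b)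

end Network


/-!
Let `p_a → a` and `p_a → p_b → b` be the arcs of the cherry. Since leaves have no children and
`p_b` has the single child `b`, the descendants of `p_a` are just `p_a, a, p_b, b`; in particular
none of these is an ancestor of the leaf `x`, and none of `a, p_b, b` is an ancestor of `p_a`.
Now take paths from the root to `x` and to `p_a`, and let `p` be the last vertex of the first
that lies on the second. The tail of the path to `x` from `p`, the tail of the path to `p_a`
from `p`, and the two arcs out of `p_a` are internally disjoint, so they form a subdivision of
`ab|x`.
-/

namespace List

theorem exists_eq_append_cons_forall_not {α : Type*} (p : α → Prop) :
    ∀ {l : List α}, (∃ v ∈ l, p v) → ∃ s v t, l = s ++ v :: t ∧ p v ∧ ∀ w ∈ t, ¬ p w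
  | [], ⟨_, hv, _⟩ => absurd hv not_mem_nil
  | a :: l, ⟨v, hv, hpv⟩ => by
    by_cases hl : ∃ w ∈ l, p w
    · obtain ⟨s, v, t, rfl, hv, ht⟩ := exists_eq_append_cons_forall_not p hl
      exact ⟨a :: s, v, t, rfl, hv, ht⟩
    · refine ⟨[], a, l, rfl, ?_, fun w hw hpw => hl ⟨w, hw, hpw⟩⟩
      rcases mem_cons.mp hv with rfl | hv
      · exact hpv
      · exact absurd ⟨v, hv, hpv⟩ hl

end List

namespace Network

variable {X : Type} {N : Network X} {u v w : N.V} {l : List N.V}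

theorem IsPathFromTo.desc (h : N.IsPathFromTo l u v) : N.Desc u v := by
  obtain ⟨hc, hh, hl⟩ := h
  obtain _ | ⟨a, t⟩ := l
  · simp at hh
  obtain rfl : a = u := Option.some.inj hh
  exact List.relationReflTransGen_of_exists_isChain_cons t hc
    (Option.some.inj ((List.getLast?_eq_some_getLast _).symm.trans hl))

theorem IsPathFromTo.suffix {s t : List N.V} (h : N.IsPathFromTo (s ++ w :: t) u v) :
    N.IsPathFromTo (w :: t) w v :=
  ⟨List.IsChain.suffix h.1 (List.suffix_append s _), rfl,
    (List.getLast?_append_of_ne_nil s (List.cons_ne_nil w t)).symm.trans h.2.2⟩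

theorem IsPathFromTo.desc_of_mem (h : N.IsPathFromTo l u v) (hw : w ∈ l) : N.Desc w v := by
  obtain ⟨s, t, rfl⟩ := List.append_of_mem hw
  exact h.suffix.desc

theorem Desc.exists_isPathFromTo (h : N.Desc u v) : ∃ l, N.IsPathFromTo l u v := by
  obtain ⟨l, hc, hl⟩ := List.exists_isChain_cons_of_relationReflTransGen h
  exact ⟨u :: l, hc, rfl, (List.getLast?_eq_some_getLast _).trans (congrArg some hl)⟩

theorem Desc.mem_of_forall_arc {S : Set N.V} (hS : ∀ v ∈ S, ∀ w, N.arc v w → w ∈ S)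
    (h : N.Desc u v) (hu : u ∈ S) : v ∈ S := by
  induction h with
  | refl => exact hu
  | tail _ hvw ih => exact hS _ ih _ hvw

theorem eq_of_arc_of_isRetic (hu : N.IsRetic u) (hv : N.arc u v) (hw : N.arc u w) : v = w := by
  obtain ⟨c, hc⟩ := Set.ncard_eq_one.mp hu.2
  have hv' : v ∈ N.children u := hv
  have hw' : w ∈ N.children u := hw
  rw [hc] at hv' hw'
  exact hv'.trans hw'.symm

theorem displays_of_fork {a b x : X} {q : N.V} {la lb : List N.V}
    (hroot : ∀ v, N.Desc N.root v) (hab : a ≠ b)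
    (ha : N.IsPathFromTo la q (N.leaf a)) (hb : N.IsPathFromTo lb q (N.leaf b))
    (hab_disj : ∀ v ∈ la, v ∈ lb → v = q)
    (hq : ∀ v ∈ la ++ lb, v ≠ q → ¬ N.Desc v q)
    (hx : ∀ v ∈ la ++ lb, ¬ N.Desc v (N.leaf x)) :
    N.Displays a b x := by
  have hla : N.leaf a ∈ la ++ lb := List.mem_append_left _ (List.mem_of_getLast? ha.2.2)
  have hlb : N.leaf b ∈ la ++ lb := List.mem_append_right _ (List.mem_of_getLast? hb.2.2)
  have hqa : q ∈ la ++ lb := List.mem_append_left _ (List.mem_of_mem_head? ha.2.1)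
  obtain ⟨Q, hQ⟩ := (hroot q).exists_isPathFromTo
  obtain ⟨P, hP⟩ := (hroot (N.leaf x)).exists_isPathFromTo
  obtain ⟨s, p, t, rfl, hpQ, htQ⟩ := List.exists_eq_append_cons_forall_not (· ∈ Q)
    ⟨N.root, List.mem_of_mem_head? hP.2.1, List.mem_of_mem_head? hQ.2.1⟩
  obtain ⟨s', t', rfl⟩ := List.append_of_mem hpQ
  have hdesc_x : ∀ v ∈ p :: t, N.Desc v (N.leaf x) := fun v hv =>
    hP.desc_of_mem (List.mem_append_right _ hv)
  refine ⟨hab, fun h => hx _ hla (h ▸ .refl), fun h => hx _ hlb (h ▸ .refl), p, q,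
    p :: t', la, lb, p :: t, fun h => hx _ hqa (h ▸ hdesc_x p List.mem_cons_self),
    hQ.suffix, ha, hb, hP.suffix, hab_disj, ?_, ?_⟩
  · intro v hv hvab
    by_contra hvq
    exact hq v (List.mem_append.mpr hvab) hvq (hQ.suffix.desc_of_mem hv)
  · intro v hv hv'
    rcases List.mem_cons.mp hv with rfl | hvt
    · rfl
    rcases hv' with hv0 | hvab
    · exact absurd (List.mem_append_right s' hv0) (htQ v hvt)
    · exact absurd (hdesc_x v (List.mem_cons_of_mem p hvt)) (hx v (List.mem_append.mpr hvab))

namespace Wf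

theorem not_arc_leaf (hN : N.Wf) (x : X) (v : N.V) : ¬ N.arc (N.leaf x) v := by
  obtain ⟨hfin, -, -, -, -, hleaf, -⟩ := hN
  have : N.children (N.leaf x) = ∅ := (Set.ncard_eq_zero (Set.toFinite _)).mp (hleaf x).2
  exact fun h => this.subset h

theorem ne_leaf_of_arc (hN : N.Wf) (h : N.arc u v) (x : X) : u ≠ N.leaf x := by
  rintro rfl
  exact hN.not_arc_leaf x v h

theorem children_ncard_le_two (hN : N.Wf) (v : N.V) : (N.children v).ncard ≤ 2 := by
  obtain ⟨-, -, -, hroot, -, hleaf, hcases⟩ := hN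
  rcases hcases v with rfl | ⟨x, rfl⟩ | hv | hv
  · exact hroot.le
  · rw [(hleaf x).2]; omega
  · exact hv.2.le
  · rw [hv.2]; omega

theorem eq_or_eq_of_arc (hN : N.Wf) {v₁ v₂ : N.V} (h₁ : N.arc u v₁) (h₂ : N.arc u v₂)
    (hne : v₁ ≠ v₂) (hw : N.arc u w) : w = v₁ ∨ w = v₂ := by
  have : Finite N.V := hN.1
  by_contra! hw'
  have : 2 < (N.children u).ncard :=
    (Set.two_lt_ncard (Set.toFinite _)).mpr ⟨v₁, h₁, v₂, h₂, w, hw, hne, hw'.1.symm, hw'.2.symm⟩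
  exact absurd (hN.children_ncard_le_two u) this.not_ge

theorem desc_root (hN : N.Wf) (v : N.V) : N.Desc N.root v := by
  obtain ⟨hfin, hacyc, -, -, -, hleaf, hcases⟩ := hN
  have : IsTrans N.V (Relation.TransGen N.arc) := ⟨fun _ _ _ => .trans⟩
  have : Std.Irrefl (Relation.TransGen N.arc) := ⟨hacyc⟩
  have hwf : WellFounded N.arc :=
    Subrelation.wf .single (Finite.wellFounded_of_trans_of_irrefl (Relation.TransGen N.arc))
  induction v using hwf.induction with
  | _ v ih =>
    by_cases hv : v = N.root
    · exact hv ▸ .refl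
    have : (N.parents v).ncard ≠ 0 := by
      rcases hcases v with h | ⟨x, rfl⟩ | h | h
      · exact absurd h hv
      · rw [(hleaf x).1]; omega
      · rw [h.1]; omega
      · rw [h.1]; omega
    obtain ⟨u, hu⟩ := Set.nonempty_of_ncard_ne_zero this
    exact (ih u hu).tail hu

theorem displays_of_reticCherry (hN : N.Wf) {a b x : X} (hrc : N.ReticCherry a b)
    (hxa : x ≠ a) (hxb : x ≠ b) : N.Displays a b x := by
  obtain ⟨hab, pa, pb, hpa, hpb, hretic, hpapb⟩ := hrc
  have hpb_ne_leaf := hN.ne_leaf_of_arc hpb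
  have hpa_ne_leaf := hN.ne_leaf_of_arc hpa
  have hinj : Function.Injective N.leaf := hN.2.2.2.2.1
  have hpa_ne_pb : pa ≠ pb := fun h => hN.2.1 pa (.single (h ▸ hpapb))
  have hpb_child : ∀ w, N.arc pb w → w = N.leaf b := fun w hw => eq_of_arc_of_isRetic hretic hw hpb
  have hpa_child : ∀ w, N.arc pa w → w = N.leaf a ∨ w = pb :=
    fun w => hN.eq_or_eq_of_arc hpa hpapb (hpb_ne_leaf a).symm
  set S : Set N.V := {N.leaf a, pb, N.leaf b}
  have hS : ∀ v ∈ S, ∀ w, N.arc v w → w ∈ S := by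
    rintro v (rfl | rfl | rfl) w hw
    · exact absurd hw (hN.not_arc_leaf a w)
    · simp [S, hpb_child w hw]
    · exact absurd hw (hN.not_arc_leaf b w)
  have hS' : ∀ v ∈ insert pa S, ∀ w, N.arc v w → w ∈ insert pa S := by
    rintro v (rfl | hv) w hw
    · rcases hpa_child w hw with rfl | rfl <;> simp [S]
    · exact Or.inr (hS v hv w hw)
  refine displays_of_fork hN.desc_root hab (la := [pa, N.leaf a]) (lb := [pa, pb, N.leaf b])
    ⟨.cons_cons hpa (.singleton _), rfl, rfl⟩
    ⟨.cons_cons hpapb (.cons_cons hpb (.singleton _)), rfl, rfl⟩ ?_ ?_ ?_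
  · simp [hpa_ne_leaf, (hpb_ne_leaf a).symm, hinj.ne hab]
  · intro v hv hvq hdesc
    have : pa ∈ S := hdesc.mem_of_forall_arc hS (by simpa [S, hvq] using hv)
    simp [S, hpa_ne_leaf, hpa_ne_pb] at this
  · intro v hv hdesc
    have : N.leaf x ∈ insert pa S := hdesc.mem_of_forall_arc hS' (by simp [S] at hv ⊢; tauto)
    simp [S, hinj.ne hxa, hinj.ne hxb, (hpa_ne_leaf x).symm, (hpb_ne_leaf x).symm] at this

end Wf

end Network

theorem retic_cherry_displays_ab_general {X : Type} (N : Network X)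
    (h : N.IsBinaryPhylo) (a b : X)
    (hrc : N.ReticCherry a b) :
    ∀ x : X, x ≠ a → x ≠ b → N.Displays a b x := by
  intro x hxa hxb
  rcases h with hN | hdeg
  · exact hN.displays_of_reticCherry hrc hxa hxb
  · obtain ⟨-, pa, -, hpa, -⟩ := hrc
    exact absurd hpa (hdeg.2.1 _ _)

/-- If `{a,b}` is a reticulated cherry of a binary normal network `N` with
reticulation leaf `b`, then `ab|x` is displayed by `N` for all `x ∈ X - {a,b}`. -/
theorem retic_cherry_displays_ab {X : Type} (N : Network X)
    (h : N.IsBinaryPhylo) (hn : N.IsNormal) (a b : X)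
    (hrc : N.ReticCherry a b) :
    ∀ x : X, x ≠ a → x ≠ b → N.Displays a b x :=
  retic_cherry_displays_ab_general N h a b hrc
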